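/- Let u_∞ ∈ H^s(ℝ^N) be positive with decay C₁/(1+|x|^{N+2s}) ≤ u_∞(x) ≤ C₂/(1+|x|^{N+2s}), and let α satisfy N+2s < α < min{2(N+2s), (p/2)(N+2s)} with p > 2. Then there exists a constant C > 0 such that for all y, z ∈ ℝ^N with |y|, |z| ≥ R ≥ 1 and (2/3)R ≤ |y−z| ≤ 2R: ∫_{ℝ^N} (1+|x|)^{-α} [u_∞(x−y)² + u_∞(x−z)²] dx ≤ C R^{N+2s−α} A_{y,z}, where A_{y,z} = ∫ u_∞(x−y)^{p−1} u_∞(x−z) dx. -/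

import Mathlib

/-! Write `β = N + 2s`. Both terms on the left are controlled by the upper decay of `u_∞`: for
`|w| ≥ R`, every `x` has `|x| ≥ |w|/2` or `|x - w| ≥ |w|/2`, so
`∫ (1+|x|)^{-α} (1+|x-w|)^{-2β} dx ≲ R^{-α} + R^{-2β} ≲ R^{-α}` since `α < 2β`.
The interaction term is bounded below by the lower decay of `u_∞` on the unit ball around `y`,
where `u_∞(x - y) ≳ 1` and `u_∞(x - z) ≳ (1 + |y - z|)^{-β} ≳ R^{-β}`.
Dividing gives the factor `R^{β-α}`. -/

open Real MeasureTheory Module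

theorem one_add_rpow_le_two_rpow_mul {β t : ℝ} (hβ : 0 ≤ β) (ht : 0 ≤ t) :
    (1 + t) ^ β ≤ 2 ^ β * (1 + t ^ β) := by
  have hmax : 1 + t ≤ 2 * max 1 t := by
    rcases le_total 1 t with h | h <;> simp only [max_eq_left, max_eq_right, h] <;> linarith
  calc (1 + t) ^ β ≤ (2 * max 1 t) ^ β := rpow_le_rpow (by positivity) hmax hβ
    _ = 2 ^ β * max 1 t ^ β := mul_rpow (by norm_num) (by positivity)
    _ ≤ 2 ^ β * (1 + t ^ β) := by
      gcongr
      rcases le_total 1 t with h | h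
      · rw [max_eq_right h]; linarith
      · rw [max_eq_left h, one_rpow]; linarith [rpow_nonneg ht β]

theorem div_one_add_rpow_le {C β t : ℝ} (hC : 0 ≤ C) (hβ : 0 ≤ β) (ht : 0 ≤ t) :
    C / (1 + t ^ β) ≤ C * 2 ^ β * (1 + t) ^ (-β) := by
  rw [rpow_neg (by positivity), ← div_eq_mul_inv,
    div_le_div_iff₀ (by positivity) (by positivity), mul_assoc]
  exact mul_le_mul_of_nonneg_left (one_add_rpow_le_two_rpow_mul hβ ht) hC

theorem half_mul_rpow_neg_le_div_one_add_rpow {c β t a : ℝ} (hc : 0 ≤ c) (hβ : 0 ≤ β)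
    (ht : 0 ≤ t) (hta : t ≤ a) (ha : 1 ≤ a) :
    c / 2 * a ^ (-β) ≤ c / (1 + t ^ β) := by
  have hta' : t ^ β ≤ a ^ β := rpow_le_rpow ht hta hβ
  have ha' : 1 ≤ a ^ β := one_le_rpow ha hβ
  rw [rpow_neg (by linarith), ← div_eq_mul_inv, div_div]
  exact div_le_div_of_nonneg_left hc (by positivity) (by linarith)

theorem one_add_half_rpow_neg_le {R a r : ℝ} (hR : 0 < R) (ha : R ≤ a) (hr : 0 ≤ r) :
    (1 + a / 2) ^ (-r) ≤ 2 ^ r * R ^ (-r) := by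
  calc (1 + a / 2) ^ (-r) ≤ (R / 2) ^ (-r) :=
        rpow_le_rpow_of_nonpos (by positivity) (by linarith) (by linarith)
    _ = 2 ^ r * R ^ (-r) := by
        rw [div_rpow hR.le (by norm_num), rpow_neg hR.le, rpow_neg (by norm_num : (0 : ℝ) ≤ 2)]
        field_simp

theorem one_add_norm_rpow_neg_mul_le {E : Type*} [SeminormedAddCommGroup E] {σ τ : ℝ}
    (hσ : 0 ≤ σ) (hτ : 0 ≤ τ) (x w : E) :
    (1 + ‖x‖) ^ (-σ) * (1 + ‖x - w‖) ^ (-τ) ≤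
      (1 + ‖w‖ / 2) ^ (-σ) * (1 + ‖x - w‖) ^ (-τ) +
        (1 + ‖w‖ / 2) ^ (-τ) * (1 + ‖x‖) ^ (-σ) := by
  have htri : ‖w‖ ≤ ‖x‖ + ‖x - w‖ := by
    simpa only [norm_sub_rev w x] using norm_le_insert' w x
  rcases le_total (‖w‖ / 2) ‖x‖ with h | h
  · have hx : (1 + ‖x‖) ^ (-σ) ≤ (1 + ‖w‖ / 2) ^ (-σ) :=
      rpow_le_rpow_of_nonpos (by positivity) (by linarith) (by linarith)
    calc _ ≤ (1 + ‖w‖ / 2) ^ (-σ) * (1 + ‖x - w‖) ^ (-τ) :=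
          mul_le_mul_of_nonneg_right hx (by positivity)
      _ ≤ _ := le_add_of_nonneg_right (by positivity)
  · have hxw : (1 + ‖x - w‖) ^ (-τ) ≤ (1 + ‖w‖ / 2) ^ (-τ) :=
      rpow_le_rpow_of_nonpos (by positivity) (by linarith) (by linarith)
    calc _ ≤ (1 + ‖w‖ / 2) ^ (-τ) * (1 + ‖x‖) ^ (-σ) := by
          rw [mul_comm]; exact mul_le_mul_of_nonneg_right hxw (by positivity)
      _ ≤ _ := le_add_of_nonneg_left (by positivity)

section

variable {E : Type*} [NormedAddCommGroup E] [NormedSpace ℝ E] [FiniteDimensional ℝ E]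
  [MeasurableSpace E] [BorelSpace E] {μ : Measure E} [μ.IsAddHaarMeasure]

theorem integrable_one_add_norm_sub {r : ℝ} (hr : (finrank ℝ E : ℝ) < r) (w : E) :
    Integrable (fun x ↦ (1 + ‖x - w‖) ^ (-r)) μ :=
  (integrable_one_add_norm hr).comp_sub_right w

theorem integral_one_add_norm_rpow_neg_mul_le {σ τ : ℝ} (hσ : (finrank ℝ E : ℝ) < σ)
    (hτ : (finrank ℝ E : ℝ) < τ) (w : E) :
    ∫ x, (1 + ‖x‖) ^ (-σ) * (1 + ‖x - w‖) ^ (-τ) ∂μ ≤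
      (1 + ‖w‖ / 2) ^ (-σ) * ∫ x, (1 + ‖x‖) ^ (-τ) ∂μ +
        (1 + ‖w‖ / 2) ^ (-τ) * ∫ x, (1 + ‖x‖) ^ (-σ) ∂μ := by
  have hσ0 : 0 ≤ σ := (Nat.cast_nonneg _).trans hσ.le
  have hτ0 : 0 ≤ τ := (Nat.cast_nonneg _).trans hτ.le
  have hint₁ :=
    (integrable_one_add_norm_sub (μ := μ) hτ w).const_mul ((1 + ‖w‖ / 2) ^ (-σ))
  have hint₂ := (integrable_one_add_norm (μ := μ) hσ).const_mul ((1 + ‖w‖ / 2) ^ (-τ))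
  have hshift : ∫ x, (1 + ‖x - w‖) ^ (-τ) ∂μ = ∫ x, (1 + ‖x‖) ^ (-τ) ∂μ :=
    integral_sub_right_eq_self (fun x ↦ (1 + ‖x‖) ^ (-τ)) w
  calc _ ≤ ∫ x, ((1 + ‖w‖ / 2) ^ (-σ) * (1 + ‖x - w‖) ^ (-τ) +
          (1 + ‖w‖ / 2) ^ (-τ) * (1 + ‖x‖) ^ (-σ)) ∂μ :=
        integral_mono_of_nonneg (ae_of_all _ fun x ↦ by positivity) (hint₁.add hint₂)
          (ae_of_all _ fun x ↦ one_add_norm_rpow_neg_mul_le hσ0 hτ0 x w)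
    _ = _ := by rw [integral_add hint₁ hint₂, integral_const_mul, integral_const_mul, hshift]

theorem exists_integral_one_add_norm_rpow_neg_mul_le {σ τ : ℝ}
    (hσ : (finrank ℝ E : ℝ) < σ) (hτ : (finrank ℝ E : ℝ) < τ) (hστ : σ ≤ τ) :
    ∃ C, ∀ R, 1 ≤ R → ∀ w : E, R ≤ ‖w‖ →
      ∫ x, (1 + ‖x‖) ^ (-σ) * (1 + ‖x - w‖) ^ (-τ) ∂μ ≤ C * R ^ (-σ) := by
  have hσ0 : 0 ≤ σ := (Nat.cast_nonneg _).trans hσ.le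
  have hτ0 : 0 ≤ τ := (Nat.cast_nonneg _).trans hτ.le
  set Iσ := ∫ x, (1 + ‖x‖) ^ (-σ) ∂μ
  set Iτ := ∫ x, (1 + ‖x‖) ^ (-τ) ∂μ
  have hIσ : 0 ≤ Iσ := integral_nonneg fun x ↦ by positivity
  have hIτ : 0 ≤ Iτ := integral_nonneg fun x ↦ by positivity
  refine ⟨2 ^ σ * Iτ + 2 ^ τ * Iσ, fun R hR w hw ↦ ?_⟩
  have hR0 : 0 < R := by linarith
  have hRστ : R ^ (-τ) ≤ R ^ (-σ) := rpow_le_rpow_of_exponent_le hR (by linarith)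
  calc _ ≤ (1 + ‖w‖ / 2) ^ (-σ) * Iτ + (1 + ‖w‖ / 2) ^ (-τ) * Iσ :=
        integral_one_add_norm_rpow_neg_mul_le hσ hτ w
    _ ≤ 2 ^ σ * R ^ (-σ) * Iτ + 2 ^ τ * R ^ (-τ) * Iσ := by
        gcongr
        · exact one_add_half_rpow_neg_le hR0 hw hσ0
        · exact one_add_half_rpow_neg_le hR0 hw hτ0
    _ ≤ 2 ^ σ * R ^ (-σ) * Iτ + 2 ^ τ * R ^ (-σ) * Iσ := by gcongr
    _ = (2 ^ σ * Iτ + 2 ^ τ * Iσ) * R ^ (-σ) := by ring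

theorem exists_integral_one_add_norm_rpow_neg_mul_sq_add_sq_le {u : E → ℝ} {A β σ : ℝ}
    (hu0 : ∀ x, 0 ≤ u x) (hu : ∀ x, u x ≤ A * (1 + ‖x‖) ^ (-β))
    (hσ : (finrank ℝ E : ℝ) < σ) (hσβ : σ ≤ 2 * β) :
    ∃ K, ∀ R, 1 ≤ R → ∀ y z : E, R ≤ ‖y‖ → R ≤ ‖z‖ →
      ∫ x, (1 + ‖x‖) ^ (-σ) * (u (x - y) ^ 2 + u (x - z) ^ 2) ∂μ ≤ K * R ^ (-σ) := by
  have hτ : (finrank ℝ E : ℝ) < 2 * β := hσ.trans_le hσβ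
  obtain ⟨C, hC⟩ := exists_integral_one_add_norm_rpow_neg_mul_le (μ := μ) hσ hτ hσβ
  have hsq : ∀ x, u x ^ 2 ≤ A ^ 2 * (1 + ‖x‖) ^ (-(2 * β)) := fun x ↦ by
    calc u x ^ 2 ≤ (A * (1 + ‖x‖) ^ (-β)) ^ 2 := pow_le_pow_left₀ (hu0 x) (hu x) 2
      _ = A ^ 2 * (1 + ‖x‖) ^ (-(2 * β)) := by
        rw [mul_pow, ← rpow_natCast ((1 + ‖x‖) ^ (-β)) 2, ← rpow_mul (by positivity)]
        norm_num [mul_comm]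
  have hint : ∀ w : E,
      Integrable (fun x ↦ (1 + ‖x‖) ^ (-σ) * (1 + ‖x - w‖) ^ (-(2 * β))) μ :=
    fun w ↦ (integrable_one_add_norm_sub hτ w).bdd_mul (c := 1)
      (Measurable.aestronglyMeasurable (by fun_prop)) (ae_of_all _ fun x ↦ by
        rw [norm_of_nonneg (by positivity)]
        exact rpow_le_one_of_one_le_of_nonpos (by linarith [norm_nonneg x]) (by linarith))
  refine ⟨A ^ 2 * (2 * C), fun R hR y z hy hz ↦ ?_⟩
  calc _ ≤ ∫ x, A ^ 2 * ((1 + ‖x‖) ^ (-σ) * (1 + ‖x - y‖) ^ (-(2 * β)) +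
          (1 + ‖x‖) ^ (-σ) * (1 + ‖x - z‖) ^ (-(2 * β))) ∂μ := by
        refine integral_mono_of_nonneg (ae_of_all _ fun x ↦ by positivity)
          (((hint y).add (hint z)).const_mul _) (ae_of_all _ fun x ↦ ?_)
        have := add_le_add (hsq (x - y)) (hsq (x - z))
        calc _ ≤ (1 + ‖x‖) ^ (-σ) * (A ^ 2 * (1 + ‖x - y‖) ^ (-(2 * β)) +
              A ^ 2 * (1 + ‖x - z‖) ^ (-(2 * β))) :=
            mul_le_mul_of_nonneg_left this (by positivity)
          _ = _ := by ring
    _ = A ^ 2 * (∫ x, (1 + ‖x‖) ^ (-σ) * (1 + ‖x - y‖) ^ (-(2 * β)) ∂μ +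
          ∫ x, (1 + ‖x‖) ^ (-σ) * (1 + ‖x - z‖) ^ (-(2 * β)) ∂μ) := by
        rw [integral_const_mul, integral_add (hint y) (hint z)]
    _ ≤ A ^ 2 * (C * R ^ (-σ) + C * R ^ (-σ)) := by
        gcongr
        exacts [hC R hR y hy, hC R hR z hz]
    _ = A ^ 2 * (2 * C) * R ^ (-σ) := by ring

theorem integrable_rpow_comp_sub_mul_comp_sub {u : E → ℝ} {A β q : ℝ} (hmeas : Measurable u)
    (hu0 : ∀ x, 0 ≤ u x) (hu : ∀ x, u x ≤ A * (1 + ‖x‖) ^ (-β))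
    (hβ : (finrank ℝ E : ℝ) < β) (hq : 0 ≤ q) (y z : E) :
    Integrable (fun x ↦ u (x - y) ^ q * u (x - z)) μ := by
  have hβ0 : 0 ≤ β := (Nat.cast_nonneg _).trans hβ.le
  have hA : 0 ≤ A := by simpa using (hu0 0).trans (hu 0)
  have hbdd : ∀ x, u x ≤ A := fun x ↦ (hu x).trans <| mul_le_of_le_one_right hA <|
    rpow_le_one_of_one_le_of_nonpos (by linarith [norm_nonneg x]) (by linarith)
  have hdecay : Integrable (fun x ↦ u (x - z)) μ :=
    ((integrable_one_add_norm_sub hβ z).const_mul A).mono'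
      (hmeas.comp (measurable_sub_const z)).aestronglyMeasurable
      (ae_of_all _ fun x ↦ by rw [norm_of_nonneg (hu0 _)]; exact hu _)
  refine hdecay.bdd_mul (c := A ^ q)
    ((hmeas.comp (measurable_sub_const y)).pow_const q).aestronglyMeasurable
    (ae_of_all _ fun x ↦ ?_)
  rw [norm_of_nonneg (rpow_nonneg (hu0 (x - y)) q)]
  exact rpow_le_rpow (hu0 _) (hbdd _) hq

theorem exists_mul_one_add_norm_sub_rpow_neg_le_integral {u : E → ℝ} {c β q : ℝ} (hc : 0 < c)
    (hβ : 0 ≤ β) (hq : 0 ≤ q) (hlow : ∀ x, c / (1 + ‖x‖ ^ β) ≤ u x)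
    (hint : ∀ y z, Integrable (fun x ↦ u (x - y) ^ q * u (x - z)) μ) :
    ∃ κ > 0, ∀ y z : E,
      κ * (1 + ‖y - z‖) ^ (-β) ≤ ∫ x, u (x - y) ^ q * u (x - z) ∂μ := by
  set V := μ.real (Metric.closedBall (0 : E) 1)
  have hV : 0 < V := ENNReal.toReal_pos (Metric.measure_closedBall_pos μ 0 one_pos).ne'
    measure_closedBall_lt_top.ne
  have hu0 : ∀ x, 0 ≤ u x :=
    fun x ↦ (by positivity : 0 ≤ c / (1 + ‖x‖ ^ β)).trans (hlow x)
  refine ⟨(c / 2) ^ q * (c / 2) * V, by positivity, fun y z ↦ ?_⟩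
  have hball : ∀ x ∈ Metric.closedBall y 1,
      (c / 2) ^ q * (c / 2 * (1 + ‖y - z‖) ^ (-β)) ≤ u (x - y) ^ q * u (x - z) := by
    intro x hx
    rw [Metric.mem_closedBall, dist_eq_norm] at hx
    have hnear : c / 2 ≤ u (x - y) := by
      simpa using (half_mul_rpow_neg_le_div_one_add_rpow hc.le hβ (norm_nonneg _) hx le_rfl).trans
        (hlow (x - y))
    have hxz : ‖x - z‖ ≤ 1 + ‖y - z‖ := by
      simpa only [sub_add_sub_cancel] using (norm_add_le (x - y) (y - z)).trans (by linarith)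
    have hfar := (half_mul_rpow_neg_le_div_one_add_rpow hc.le hβ (norm_nonneg _) hxz
      (by linarith [norm_nonneg (y - z)])).trans (hlow (x - z))
    exact mul_le_mul (rpow_le_rpow (by positivity) hnear hq) hfar (by positivity)
      (rpow_nonneg (hu0 _) q)
  have hV' : μ.real (Metric.closedBall y 1) = V := by
    simp only [V, measureReal_def, Measure.addHaar_closedBall_center]
  calc _ = (c / 2) ^ q * (c / 2 * (1 + ‖y - z‖) ^ (-β)) * μ.real (Metric.closedBall y 1) := by
        rw [hV']; ring
    _ ≤ ∫ x in Metric.closedBall y 1, u (x - y) ^ q * u (x - z) ∂μ :=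
        setIntegral_ge_of_const_le_real Metric.isClosed_closedBall.measurableSet
          measure_closedBall_lt_top.ne hball (hint y z).integrableOn
    _ ≤ _ := setIntegral_le_integral (hint y z)
        (ae_of_all _ fun x ↦ mul_nonneg (rpow_nonneg (hu0 _) q) (hu0 _))

end

theorem stmt12_general (N : ℕ) (s p α C₁ C₂ : ℝ) (hs0 : 0 < s)
    (hp : 2 < p) (hC1 : 0 < C₁)
    (hα1 : (N : ℝ) + 2 * s < α)
    (hα2 : α < min (2 * ((N : ℝ) + 2 * s)) ((p / 2) * ((N : ℝ) + 2 * s)))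
    (u : EuclideanSpace ℝ (Fin N) → ℝ) (hmeas : Measurable u)
    (hlow : ∀ x, C₁ / (1 + ‖x‖ ^ ((N : ℝ) + 2 * s)) ≤ u x)
    (hupp : ∀ x, u x ≤ C₂ / (1 + ‖x‖ ^ ((N : ℝ) + 2 * s))) :
    ∃ C > (0 : ℝ), ∀ R : ℝ, 1 ≤ R → ∀ y z : EuclideanSpace ℝ (Fin N),
      R ≤ ‖y‖ → R ≤ ‖z‖ → (2 / 3) * R ≤ ‖y - z‖ → ‖y - z‖ ≤ 2 * R →
      (∫ x, (1 + ‖x‖) ^ (-α) * (u (x - y) ^ 2 + u (x - z) ^ 2))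
        ≤ C * R ^ ((N : ℝ) + 2 * s - α) * ∫ x, u (x - y) ^ (p - 1) * u (x - z) := by
  set β := (N : ℝ) + 2 * s
  have hNβ : (finrank ℝ (EuclideanSpace ℝ (Fin N)) : ℝ) < β := by
    simp only [finrank_euclideanSpace, Fintype.card_fin, β]; linarith
  have hβ0 : 0 ≤ β := by positivity
  have hu0 : ∀ x, 0 ≤ u x :=
    fun x ↦ (by positivity : 0 ≤ C₁ / (1 + ‖x‖ ^ β)).trans (hlow x)
  have hC₂ : 0 ≤ C₂ := by
    simpa using (le_div_iff₀ (by positivity)).mp ((hu0 0).trans (hupp 0))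
  have hu : ∀ x, u x ≤ C₂ * 2 ^ β * (1 + ‖x‖) ^ (-β) :=
    fun x ↦ (hupp x).trans (div_one_add_rpow_le hC₂ hβ0 (norm_nonneg x))
  obtain ⟨K, hK⟩ := exists_integral_one_add_norm_rpow_neg_mul_sq_add_sq_le (μ := volume) hu0 hu
    (hNβ.trans hα1) (lt_min_iff.mp hα2).1.le
  obtain ⟨κ, hκ, hA⟩ := exists_mul_one_add_norm_sub_rpow_neg_le_integral (μ := volume) hC1
    hβ0 (by linarith : 0 ≤ p - 1) hlow
    (integrable_rpow_comp_sub_mul_comp_sub hmeas hu0 hu hNβ (by linarith))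
  refine ⟨(|K| + 1) * 3 ^ β / κ, by positivity, fun R hR y z hy hz _ hyz ↦ ?_⟩
  have hR0 : 0 < R := by linarith
  have h3R : (3 * R) ^ (-β) ≤ (1 + ‖y - z‖) ^ (-β) :=
    rpow_le_rpow_of_nonpos (by positivity) (by linarith) (by linarith)
  calc _ ≤ K * R ^ (-α) := hK R hR y z hy hz
    _ ≤ (|K| + 1) * R ^ (-α) := by gcongr; linarith [le_abs_self K]
    _ = (|K| + 1) * 3 ^ β / κ * R ^ (β - α) * (κ * (3 * R) ^ (-β)) := by
        rw [rpow_neg (by positivity : (0 : ℝ) ≤ 3 * R), mul_rpow (by norm_num) hR0.le,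
          rpow_sub hR0, rpow_neg hR0.le]
        field_simp
    _ ≤ _ := by
        gcongr
        exact (mul_le_mul_of_nonneg_left h3R hκ.le).trans (hA y z)

theorem stmt12 (N : ℕ) (hN : 1 ≤ N) (s p α C₁ C₂ : ℝ) (hs0 : 0 < s) (hs1 : s < 1)
    (hp : 2 < p) (hC1 : 0 < C₁) (hC12 : C₁ < C₂)
    (hα1 : (N : ℝ) + 2 * s < α)
    (hα2 : α < min (2 * ((N : ℝ) + 2 * s)) ((p / 2) * ((N : ℝ) + 2 * s)))
    (u : EuclideanSpace ℝ (Fin N) → ℝ) (hmeas : Measurable u) (hpos : ∀ x, 0 < u x)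
    (hlow : ∀ x, C₁ / (1 + ‖x‖ ^ ((N : ℝ) + 2 * s)) ≤ u x)
    (hupp : ∀ x, u x ≤ C₂ / (1 + ‖x‖ ^ ((N : ℝ) + 2 * s))) :
    ∃ C > (0 : ℝ), ∀ R : ℝ, 1 ≤ R → ∀ y z : EuclideanSpace ℝ (Fin N),
      R ≤ ‖y‖ → R ≤ ‖z‖ → (2 / 3) * R ≤ ‖y - z‖ → ‖y - z‖ ≤ 2 * R →
      (∫ x, (1 + ‖x‖) ^ (-α) * (u (x - y) ^ 2 + u (x - z) ^ 2))
        ≤ C * R ^ ((N : ℝ) + 2 * s - α) * ∫ x, u (x - y) ^ (p - 1) * u (x - z) :=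
  stmt12_general N s p α C₁ C₂ hs0 hp hC1 hα1 hα2 u hmeas hlow hupp
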